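/- arXiv:1106.3269 — 2 statements merged into one kernel-verified Lean document; each statement's English description precedes it below -/
import Mathlib

section
/- Monotonicity of the discrete forward map: let ε > 0 and let φ̂₁, φ̂₂ ∈ M_ε satisfy φ̂₁_{i,j} ≤ φ̂₂_{i,j} for all i,j. Then Ψ̂(φ̂₁)_{i,j} ≥ Ψ̂(φ̂₂)_{i,j} for all i,j. -/
noncomputable section

open Real Filter

/-- Sup of `|g|` over `[0,1]` (the sup norm `‖g‖_∞`). -/
def supIcc (g : ℝ → ℝ) : ℝ := ⨆ x : Set.Icc (0:ℝ) 1, |g (x : ℝ)|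

/-- Sup of `|f|` over `[0,1] × ℝ` (the sup norm `‖f‖_∞`). -/
def supF (f : ℝ → ℝ → ℝ) : ℝ := ⨆ p : Set.Icc (0:ℝ) 1 × ℝ, |f (p.1 : ℝ) p.2|

/-- Membership in `M_ε`: all grid entries (for `i ≤ I`, `j ≤ J`) are at least `ε`. -/
def MemM (I J : ℕ) (ε : ℝ) (m : ℕ → ℕ → ℝ) : Prop :=
  ∀ i ≤ I, ∀ j ≤ J, ε ≤ m i j

/-- The discrete backward scheme `(Ê_φ)` with data `ψ`.  Here `Δt = T/I`, `Δx = 1/J`,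
`x_j = j/J`, and the Neumann conventions `m_{i,-1} = m_{i,0}`, `m_{i,J+1} = m_{i,J}`
are realized by the clamped indices `j - 1` (truncated `ℕ`-subtraction) and `min (j+1) J`. -/
def BScheme (T σ : ℝ) (I J : ℕ) (f : ℝ → ℝ → ℝ) (uT : ℝ → ℝ)
    (ψ φ : ℕ → ℕ → ℝ) : Prop :=
  (∀ i < I, ∀ j ≤ J,
      (φ (i+1) j - φ i j) / (T / (I:ℝ))
        + σ^2 / 2 * ((φ i (min (j+1) J) - 2 * φ i j + φ i (j-1)) / (1/(J:ℝ))^2)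
      = -(1/σ^2) * f ((j:ℝ)/(J:ℝ)) (φ i j * ψ i j) * φ i j)
  ∧ ∀ j ≤ J, φ I j = Real.exp (uT ((j:ℝ)/(J:ℝ)) / σ^2)

/-- The discrete forward scheme `(Ê_ψ)` with data `φ` (same conventions as `BScheme`). -/
def FScheme (T σ : ℝ) (I J : ℕ) (f : ℝ → ℝ → ℝ) (m0 : ℝ → ℝ)
    (φ ψ : ℕ → ℕ → ℝ) : Prop :=
  (∀ i < I, ∀ j ≤ J,
      (ψ (i+1) j - ψ i j) / (T / (I:ℝ))
        - σ^2 / 2 * ((ψ (i+1) (min (j+1) J) - 2 * ψ (i+1) j + ψ (i+1) (j-1)) / (1/(J:ℝ))^2)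
      = (1/σ^2) * f ((j:ℝ)/(J:ℝ)) (φ (i+1) j * ψ (i+1) j) * ψ (i+1) j)
  ∧ ∀ j ≤ J, ψ 0 j = m0 ((j:ℝ)/(J:ℝ)) / φ 0 j

/-- Squared grid norm `‖m‖² = max_{0 ≤ i ≤ I} (1/(J+1)) Σ_{j=0}^{J} m_{i,j}²`. -/
def gnormSq (I J : ℕ) (m : ℕ → ℕ → ℝ) : ℝ :=
  (Finset.range (I+1)).sup' (Finset.nonempty_range_iff.mpr (Nat.succ_ne_zero I))
    (fun i => (1/((J:ℝ)+1)) * ∑ j ∈ Finset.range (J+1), (m i j)^2)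

/-- Grid norm `‖m‖`. -/
def gnorm (I J : ℕ) (m : ℕ → ℕ → ℝ) : ℝ := Real.sqrt (gnormSq I J m)

/-!
Nonnegativity and comparison are both discrete maximum principles for the implicit scheme.
At a grid point where a row attains its maximum, the clamped second difference is `≤ 0`; so if
the residual of the implicit step is `≤ 0` wherever the new row is positive and the old row is
`≤ 0`, the new row is `≤ 0` as well. Applied to `-ψ` this gives `ψ ≥ 0` (since `f ≤ 0`), and
applied to `ψ₂ - ψ₁` it gives the comparison: where `ψ₂ > ψ₁ ≥ 0` we have `φ₂ ψ₂ ≥ φ₁ ψ₁`, so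
the monotonicity and sign of `f` make the reaction term of `ψ₂` at most that of `ψ₁`.
-/

open Set

-- Residual of an implicit Euler step `u ↦ v` for `∂ₜ = κ ∂ₓₓ`; `h` stands for `(Δx)²`.
def implicitHeatStep (τ κ h : ℝ) (J : ℕ) (u v : ℕ → ℝ) (j : ℕ) : ℝ :=
  (v j - u j) / τ - κ * ((v (min (j + 1) J) - 2 * v j + v (j - 1)) / h)

section implicitHeatStep

variable {τ κ h : ℝ} {J : ℕ}

theorem implicitHeatStep_sub (u₁ u₂ v₁ v₂ : ℕ → ℝ) (j : ℕ) :
    implicitHeatStep τ κ h J (u₂ - u₁) (v₂ - v₁) j =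
      implicitHeatStep τ κ h J u₂ v₂ j - implicitHeatStep τ κ h J u₁ v₁ j := by
  simp only [implicitHeatStep, Pi.sub_apply]
  ring

theorem implicitHeatStep_neg (u v : ℕ → ℝ) (j : ℕ) :
    implicitHeatStep τ κ h J (-u) (-v) j = -implicitHeatStep τ κ h J u v j := by
  simp only [implicitHeatStep, Pi.neg_apply]
  ring

theorem nonpos_of_implicitHeatStep_nonpos {u v : ℕ → ℝ} (hτ : 0 < τ) (hκ : 0 ≤ κ)
    (hh : 0 ≤ h) (hu : ∀ j ≤ J, u j ≤ 0)
    (hv : ∀ j ≤ J, 0 < v j → implicitHeatStep τ κ h J u v j ≤ 0) :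
    ∀ j ≤ J, v j ≤ 0 := by
  obtain ⟨k, hk, hmax⟩ := Finset.exists_max_image (Finset.range (J + 1)) v ⟨0, by simp⟩
  replace hk : k ≤ J := Nat.lt_succ_iff.mp (Finset.mem_range.mp hk)
  replace hmax : ∀ j ≤ J, v j ≤ v k := fun j hj => hmax j (by simpa [Nat.lt_succ_iff] using hj)
  suffices v k ≤ 0 from fun j hj => (hmax j hj).trans this
  by_contra! hpos
  have hlap : v (min (k + 1) J) - 2 * v k + v (k - 1) ≤ 0 := by
    linarith [hmax (min (k + 1) J) (min_le_right _ _), hmax (k - 1) ((k.sub_le 1).trans hk)]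
  have htime : 0 < (v k - u k) / τ := div_pos (by linarith [hu k hk]) hτ
  have hdiff : κ * ((v (min (k + 1) J) - 2 * v k + v (k - 1)) / h) ≤ 0 :=
    mul_nonpos_of_nonneg_of_nonpos hκ (div_nonpos_of_nonpos_of_nonneg hlap hh)
  have := hv k hk hpos
  rw [implicitHeatStep] at this
  linarith

theorem grid_nonpos_of_implicitHeatStep_nonpos {T : ℝ} {I : ℕ} {w : ℕ → ℕ → ℝ} (hT : 0 < T)
    (hκ : 0 ≤ κ) (hh : 0 ≤ h) (h0 : ∀ j ≤ J, w 0 j ≤ 0)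
    (hstep : ∀ i < I, ∀ j ≤ J, 0 < w (i + 1) j →
      implicitHeatStep (T / I) κ h J (w i) (w (i + 1)) j ≤ 0) :
    ∀ i ≤ I, ∀ j ≤ J, w i j ≤ 0 := by
  intro i
  induction i with
  | zero => exact fun _ => h0
  | succ i ih =>
    intro hi
    have hτ : 0 < T / I := div_pos hT (by exact_mod_cast (Nat.zero_lt_succ i).trans_le hi)
    exact nonpos_of_implicitHeatStep_nonpos hτ hκ hh (ih (by omega)) (hstep i hi)

end implicitHeatStep

theorem natCast_div_mem_Icc {j J : ℕ} (hj : j ≤ J) : (j : ℝ) / J ∈ Icc (0 : ℝ) 1 :=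
  ⟨by positivity, div_le_one_of_le₀ (by exact_mod_cast hj) J.cast_nonneg⟩

theorem apply_mul_mul_le_of_antitone {g : ℝ → ℝ} (hg : Antitone g) (hg0 : ∀ ξ, g ξ ≤ 0)
    {a₁ a₂ b₁ b₂ : ℝ} (ha₁ : 0 ≤ a₁) (ha : a₁ ≤ a₂) (hb₁ : 0 ≤ b₁) (hb : b₁ ≤ b₂) :
    g (a₂ * b₂) * b₂ ≤ g (a₁ * b₁) * b₁ :=
  calc g (a₂ * b₂) * b₂
      ≤ g (a₁ * b₁) * b₂ :=
        mul_le_mul_of_nonneg_right (hg (mul_le_mul ha hb hb₁ (ha₁.trans ha))) (hb₁.trans hb)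
    _ ≤ g (a₁ * b₁) * b₁ := mul_le_mul_of_nonpos_left hb (hg0 _)

namespace FScheme

variable {T σ : ℝ} {I J : ℕ} {f : ℝ → ℝ → ℝ} {m0 : ℝ → ℝ} {φ ψ : ℕ → ℕ → ℝ}

theorem implicitHeatStep_eq (hψ : FScheme T σ I J f m0 φ ψ) {i j : ℕ} (hi : i < I)
    (hj : j ≤ J) :
    implicitHeatStep (T / I) (σ ^ 2 / 2) ((1 / J) ^ 2) J (ψ i) (ψ (i + 1)) j =
      1 / σ ^ 2 * (f ((j : ℝ) / J) (φ (i + 1) j * ψ (i + 1) j) * ψ (i + 1) j) :=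
  (hψ.1 i hi j hj).trans (mul_assoc _ _ _)

theorem nonneg (hψ : FScheme T σ I J f m0 φ ψ) (hT : 0 < T)
    (hfneg : ∀ x ∈ Icc (0 : ℝ) 1, ∀ ξ : ℝ, f x ξ ≤ 0) (hm0 : ∀ x ∈ Icc (0 : ℝ) 1, 0 ≤ m0 x)
    (hφ0 : ∀ j ≤ J, 0 ≤ φ 0 j) :
    ∀ i ≤ I, ∀ j ≤ J, 0 ≤ ψ i j := by
  have hneg : ∀ i ≤ I, ∀ j ≤ J, (-ψ) i j ≤ 0 := by
    refine grid_nonpos_of_implicitHeatStep_nonpos (κ := σ ^ 2 / 2) (h := (1 / (J : ℝ)) ^ 2) hT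
      (by positivity) (by positivity) ?_ ?_
    · intro j hj
      rw [Pi.neg_apply, Pi.neg_apply, hψ.2 j hj, neg_nonpos]
      exact div_nonneg (hm0 _ (natCast_div_mem_Icc hj)) (hφ0 j hj)
    · intro i hi j hj hpos
      simp only [Pi.neg_apply] at hpos ⊢
      rw [implicitHeatStep_neg, hψ.implicitHeatStep_eq hi hj, neg_nonpos]
      exact mul_nonneg (by positivity) (mul_nonneg_of_nonpos_of_nonpos
        (hfneg _ (natCast_div_mem_Icc hj) _) (neg_pos.mp hpos).le)
  exact fun i hi j hj => neg_nonpos.mp (hneg i hi j hj)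

end FScheme

theorem stmt_6_general (T σ : ℝ) (hT : 0 < T)
    (I J : ℕ)
    (f : ℝ → ℝ → ℝ) (m0 : ℝ → ℝ)
    (hfneg : ∀ x ∈ Set.Icc (0:ℝ) 1, ∀ ξ : ℝ, f x ξ ≤ 0)
    (hfmono : ∀ x ∈ Set.Icc (0:ℝ) 1, Antitone (f x))
    (hm0 : ∀ x ∈ Set.Icc (0:ℝ) 1, 0 ≤ m0 x)
    (ε : ℝ) (hε : 0 < ε)
    (φ₁ φ₂ : ℕ → ℕ → ℝ) (hφ₁ : MemM I J ε φ₁)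
    (hle : ∀ i ≤ I, ∀ j ≤ J, φ₁ i j ≤ φ₂ i j)
    (ψ₁ ψ₂ : ℕ → ℕ → ℝ)
    (hψ₁ : FScheme T σ I J f m0 φ₁ ψ₁) (hψ₂ : FScheme T σ I J f m0 φ₂ ψ₂) :
    ∀ i ≤ I, ∀ j ≤ J, ψ₂ i j ≤ ψ₁ i j := by
  have hφ₁pos : ∀ i ≤ I, ∀ j ≤ J, 0 < φ₁ i j := fun i hi j hj => hε.trans_le (hφ₁ i hi j hj)
  have hψ₁nonneg := hψ₁.nonneg hT hfneg hm0 fun j hj => (hφ₁pos 0 I.zero_le j hj).le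
  have hdiff : ∀ i ≤ I, ∀ j ≤ J, (ψ₂ - ψ₁) i j ≤ 0 := by
    refine grid_nonpos_of_implicitHeatStep_nonpos (κ := σ ^ 2 / 2) (h := (1 / (J : ℝ)) ^ 2) hT
      (by positivity) (by positivity) ?_ ?_
    · intro j hj
      rw [Pi.sub_apply, Pi.sub_apply, hψ₁.2 j hj, hψ₂.2 j hj, sub_nonpos]
      exact div_le_div_of_nonneg_left (hm0 _ (natCast_div_mem_Icc hj))
        (hφ₁pos 0 I.zero_le j hj) (hle 0 I.zero_le j hj)
    · intro i hi j hj hpos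
      simp only [Pi.sub_apply, sub_pos] at hpos
      rw [Pi.sub_apply, Pi.sub_apply, implicitHeatStep_sub, hψ₁.implicitHeatStep_eq hi hj,
        hψ₂.implicitHeatStep_eq hi hj, ← mul_sub]
      refine mul_nonpos_of_nonneg_of_nonpos (by positivity) (sub_nonpos.mpr ?_)
      exact apply_mul_mul_le_of_antitone (hfmono _ (natCast_div_mem_Icc hj))
        (hfneg _ (natCast_div_mem_Icc hj)) (hφ₁pos (i + 1) hi j hj).le (hle (i + 1) hi j hj)
        (hψ₁nonneg (i + 1) hi j hj) hpos.le
  exact fun i hi j hj => sub_nonpos.mp (hdiff i hi j hj)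

theorem stmt_6 (T σ : ℝ) (hT : 0 < T) (hσ : 0 < σ)
    (I J : ℕ) (hI : 1 ≤ I) (hJ : 1 ≤ J)
    (f : ℝ → ℝ → ℝ) (m0 : ℝ → ℝ)
    (hfc : ∀ x ∈ Set.Icc (0:ℝ) 1, Continuous (f x))
    (hfb : ∃ B : ℝ, ∀ x ∈ Set.Icc (0:ℝ) 1, ∀ ξ : ℝ, |f x ξ| ≤ B)
    (hfneg : ∀ x ∈ Set.Icc (0:ℝ) 1, ∀ ξ : ℝ, f x ξ ≤ 0)
    (hfmono : ∀ x ∈ Set.Icc (0:ℝ) 1, Antitone (f x))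
    (hm0b : ∃ B : ℝ, ∀ x ∈ Set.Icc (0:ℝ) 1, |m0 x| ≤ B)
    (hm0 : ∀ x ∈ Set.Icc (0:ℝ) 1, 0 ≤ m0 x)
    (ε : ℝ) (hε : 0 < ε)
    (φ₁ φ₂ : ℕ → ℕ → ℝ) (hφ₁ : MemM I J ε φ₁) (hφ₂ : MemM I J ε φ₂)
    (hle : ∀ i ≤ I, ∀ j ≤ J, φ₁ i j ≤ φ₂ i j)
    (ψ₁ ψ₂ : ℕ → ℕ → ℝ)
    (hψ₁ : FScheme T σ I J f m0 φ₁ ψ₁) (hψ₂ : FScheme T σ I J f m0 φ₂ ψ₂) :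
    ∀ i ≤ I, ∀ j ≤ J, ψ₂ i j ≤ ψ₁ i j :=
  stmt_6_general T σ hT I J f m0 hfneg hfmono hm0 ε hε φ₁ φ₂ hφ₁ hle ψ₁ ψ₂ hψ₁ hψ₂
end
end

section
/- The iterates of the discrete scheme satisfy: (i) the sequence (φ̂^{n+1/2})_{n≥0} is entrywise nonincreasing in n and each φ̂^{n+1/2} belongs to M_ε, with ε := exp(−(‖u_T‖_∞ + ‖f‖_∞ T)/σ²); (ii) the sequence (ψ̂ⁿ)_{n≥0} is entrywise nondecreasing in n, each ψ̂ⁿ belongs to M_0, and all entries of every ψ̂ⁿ are bounded above by ‖m_0‖_∞/ε. -/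
noncomputable section

open Real Filter

/-!
Each half-step of the scheme is an implicit Euler step
`w_i - κ Δw_i = w_{i∓1} + (Δt/σ²) f(x, φψ) w_i` with `κ = Δt σ² / (2 Δx²) ≥ 0`. At a spatial
minimum the Neumann second difference is nonnegative, so a discrete minimum principle propagates
nonnegativity in time whenever the reaction term has the right sign where `w < 0`. Since `f ≤ 0`
this gives `ψ ≥ 0`, `ψ ≤ ‖m_0‖_∞ / ε`, and `φ_i ≥ e^{-‖u_T‖_∞/σ²} (1 + Δt ‖f‖_∞/σ²)^{-(I-i)} ≥ ε`.
Since moreover `f` is nonincreasing, applying it to differences of two solutions yields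
comparison: larger `ψ` gives smaller `φ`, and smaller `φ` gives larger `ψ`. Starting from
`ψ⁰ = 0 ≤ ψ¹`, these two comparisons alternate and give both monotonicities by induction.
-/

def neumannLap (J : ℕ) (w : ℕ → ℝ) (j : ℕ) : ℝ :=
  w (min (j + 1) J) - 2 * w j + w (j - 1)

lemma neumannLap_nonneg_of_forall_le {J j : ℕ} {w : ℕ → ℝ} (hj : j ≤ J)
    (hmin : ∀ k ≤ J, w j ≤ w k) : 0 ≤ neumannLap J w j := by
  have h₁ := hmin (min (j + 1) J) (min_le_right _ _)
  have h₂ := hmin (j - 1) ((Nat.sub_le j 1).trans hj)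
  unfold neumannLap
  linarith

@[simp]
lemma neumannLap_sub (J : ℕ) (v w : ℕ → ℝ) (j : ℕ) :
    neumannLap J (fun k => v k - w k) j = neumannLap J v j - neumannLap J w j := by
  unfold neumannLap
  ring

@[simp]
lemma neumannLap_const (J : ℕ) (c : ℝ) (j : ℕ) : neumannLap J (fun _ => c) j = 0 := by
  unfold neumannLap
  ring

lemma minimum_principle_neumannLap {J : ℕ} {κ : ℝ} (hκ : 0 ≤ κ) {w : ℕ → ℝ}
    (h : ∀ j ≤ J, w j < 0 → 0 ≤ w j - κ * neumannLap J w j) :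
    ∀ j ≤ J, 0 ≤ w j := by
  obtain ⟨j₀, hj₀, hmin⟩ :=
    (Finset.range (J + 1)).exists_min_image w ⟨0, Finset.mem_range.2 J.succ_pos⟩
  have hj₀J : j₀ ≤ J := Nat.lt_succ_iff.1 (Finset.mem_range.1 hj₀)
  have hmin' : ∀ k ≤ J, w j₀ ≤ w k := fun k hk =>
    hmin k (Finset.mem_range.2 (Nat.lt_succ_of_le hk))
  suffices 0 ≤ w j₀ from fun j hj => this.trans (hmin' j hj)
  by_contra! hneg
  have hlap := mul_nonneg hκ (neumannLap_nonneg_of_forall_le hj₀J hmin')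
  linarith [h j₀ hj₀J hneg]

lemma memM_zero_of_forward {I J : ℕ} {κ : ℝ} (hκ : 0 ≤ κ) {w : ℕ → ℕ → ℝ}
    (h₀ : ∀ j ≤ J, 0 ≤ w 0 j)
    (hstep : ∀ i < I, (∀ j ≤ J, 0 ≤ w i j) →
      ∀ j ≤ J, w (i + 1) j < 0 → 0 ≤ w (i + 1) j - κ * neumannLap J (w (i + 1)) j) :
    MemM I J 0 w := by
  intro i
  induction i with
  | zero => exact fun _ => h₀
  | succ i ih =>
    intro hi
    exact minimum_principle_neumannLap hκ (hstep i hi (ih (Nat.le_of_succ_le hi)))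

lemma memM_zero_of_backward {I J : ℕ} {κ : ℝ} (hκ : 0 ≤ κ) {w : ℕ → ℕ → ℝ}
    (hterm : ∀ j ≤ J, 0 ≤ w I j)
    (hstep : ∀ i < I, (∀ j ≤ J, 0 ≤ w (i + 1) j) →
      ∀ j ≤ J, w i j < 0 → 0 ≤ w i j - κ * neumannLap J (w i) j) :
    MemM I J 0 w := fun _ hi =>
  Nat.decreasingInduction (motive := fun i _ => ∀ j ≤ J, 0 ≤ w i j)
    (fun i hi ih => minimum_principle_neumannLap hκ (hstep i hi ih)) hterm hi

lemma natCast_div_natCast_mem_Icc {j J : ℕ} (hj : j ≤ J) : (j : ℝ) / J ∈ Set.Icc (0 : ℝ) 1 :=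
  ⟨by positivity, div_le_one_of_le₀ (by exact_mod_cast hj) J.cast_nonneg⟩

lemma abs_le_supIcc {g : ℝ → ℝ} (hg : ∃ B : ℝ, ∀ x ∈ Set.Icc (0 : ℝ) 1, |g x| ≤ B)
    {x : ℝ} (hx : x ∈ Set.Icc (0 : ℝ) 1) : |g x| ≤ supIcc g := by
  obtain ⟨B, hB⟩ := hg
  exact le_ciSup (f := fun y : Set.Icc (0 : ℝ) 1 => |g y|)
    ⟨B, by rintro _ ⟨y, rfl⟩; exact hB y y.2⟩ ⟨x, hx⟩

lemma supIcc_nonneg (g : ℝ → ℝ) : 0 ≤ supIcc g :=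
  Real.iSup_nonneg fun _ => abs_nonneg _

lemma abs_le_supF {f : ℝ → ℝ → ℝ} (hf : ∃ B : ℝ, ∀ x ∈ Set.Icc (0 : ℝ) 1, ∀ ξ : ℝ, |f x ξ| ≤ B)
    {x : ℝ} (hx : x ∈ Set.Icc (0 : ℝ) 1) (ξ : ℝ) : |f x ξ| ≤ supF f := by
  obtain ⟨B, hB⟩ := hf
  exact le_ciSup (f := fun p : Set.Icc (0 : ℝ) 1 × ℝ => |f p.1 p.2|)
    ⟨B, by rintro _ ⟨p, rfl⟩; exact hB p.1 p.1.2 p.2⟩ (⟨x, hx⟩, ξ)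

lemma antitone_mul_le_mul {g : ℝ → ℝ} (hg : Antitone g) {ξ ξ' p p' : ℝ} (hξ : ξ ≤ ξ')
    (hgξ' : g ξ' ≤ 0) (hp : 0 ≤ p) (hpp' : p ≤ p') : g ξ' * p' ≤ g ξ * p :=
  calc g ξ' * p' ≤ g ξ' * p := mul_le_mul_of_nonpos_left hpp' hgξ'
    _ ≤ g ξ * p := mul_le_mul_of_nonneg_right (hg hξ) hp

section Schemes

variable {T σ : ℝ} {I J : ℕ} {f : ℝ → ℝ → ℝ}

lemma BScheme.sub_neumannLap_eq {uT : ℝ → ℝ} {ψ φ : ℕ → ℕ → ℝ}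
    (hs : BScheme T σ I J f uT ψ φ) (hT : T ≠ 0) {i j : ℕ} (hi : i < I) (hj : j ≤ J) :
    φ i j - T / I * σ ^ 2 / 2 * J ^ 2 * neumannLap J (φ i) j
      = φ (i + 1) j + T / I / σ ^ 2 * f (j / J) (φ i j * ψ i j) * φ i j := by
  have hΔt : T / I ≠ 0 := div_ne_zero hT (by exact_mod_cast (Nat.zero_lt_of_lt hi).ne')
  have hcancel : (φ (i + 1) j - φ i j) / (T / I) * (T / I) = φ (i + 1) j - φ i j :=
    div_mul_cancel₀ _ hΔt
  have h := hs.1 i hi j hj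
  rw [one_div, inv_pow, div_inv_eq_mul] at h
  unfold neumannLap
  linear_combination -(T / I) * h + hcancel

lemma FScheme.sub_neumannLap_eq {m0 : ℝ → ℝ} {φ ψ : ℕ → ℕ → ℝ}
    (hs : FScheme T σ I J f m0 φ ψ) (hT : T ≠ 0) {i j : ℕ} (hi : i < I) (hj : j ≤ J) :
    ψ (i + 1) j - T / I * σ ^ 2 / 2 * J ^ 2 * neumannLap J (ψ (i + 1)) j
      = ψ i j + T / I / σ ^ 2 * f (j / J) (φ (i + 1) j * ψ (i + 1) j) * ψ (i + 1) j := by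
  have hΔt : T / I ≠ 0 := div_ne_zero hT (by exact_mod_cast (Nat.zero_lt_of_lt hi).ne')
  have hcancel : (ψ (i + 1) j - ψ i j) / (T / I) * (T / I) = ψ (i + 1) j - ψ i j :=
    div_mul_cancel₀ _ hΔt
  have h := hs.1 i hi j hj
  rw [one_div, inv_pow, div_inv_eq_mul] at h
  unfold neumannLap
  linear_combination (T / I) * h - hcancel

lemma BScheme.div_pow_le {uT : ℝ → ℝ} {ψ φ : ℕ → ℕ → ℝ} (hs : BScheme T σ I J f uT ψ φ)
    (hT : 0 < T) {K : ℝ} (hf : ∀ x ∈ Set.Icc (0 : ℝ) 1, ∀ ξ, f x ξ ≤ 0)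
    (hfK : ∀ x ∈ Set.Icc (0 : ℝ) 1, ∀ ξ, -K ≤ f x ξ) {L : ℝ} (hL0 : 0 ≤ L)
    (hL : ∀ j ≤ J, L ≤ φ I j) :
    ∀ i ≤ I, ∀ j ≤ J, L / (1 + T / I / σ ^ 2 * K) ^ (I - i) ≤ φ i j := by
  set μ := T / I / σ ^ 2
  have hK : 0 ≤ K := by
    linarith [hf 0 ⟨le_rfl, zero_le_one⟩ 0, hfK 0 ⟨le_rfl, zero_le_one⟩ 0]
  set ℓ : ℕ → ℝ := fun i => L / (1 + μ * K) ^ (I - i)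
  have hℓ0 (i : ℕ) : 0 ≤ ℓ i := by positivity
  have hℓsucc {i : ℕ} (hi : i < I) : ℓ (i + 1) = (1 + μ * K) * ℓ i := by
    have : 0 < 1 + μ * K := by positivity
    simp only [ℓ]
    rw [show I - i = I - (i + 1) + 1 by omega, pow_succ]
    field_simp
  have hw := memM_zero_of_backward (I := I) (J := J) (κ := T / I * σ ^ 2 / 2 * J ^ 2)
    (by positivity)
    (w := fun i j => φ i j - ℓ i) (fun j hj => by simpa [ℓ] using hL j hj) ?_
  · intro i hi j hj
    linarith [hw i hi j hj]
  intro i hi hnext j hj hneg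
  have hxj := natCast_div_natCast_mem_Icc hj
  have hstep := hs.sub_neumannLap_eq hT.ne' hi hj
  set F := f (j / J) (φ i j * ψ i j)
  have hFφ : F * ℓ i ≤ F * φ i j := mul_le_mul_of_nonpos_left (by linarith) (hf _ hxj _)
  have hFℓ : -K * ℓ i ≤ F * ℓ i := mul_le_mul_of_nonneg_right (hfK _ hxj _) (hℓ0 i)
  have hreact : 0 ≤ μ * (K * ℓ i + F * φ i j) := mul_nonneg (by positivity) (by linarith)
  simp only [neumannLap_sub, neumannLap_const, sub_zero]
  linarith [hnext j hj, hℓsucc hi]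

lemma BScheme.memM_exp {uT : ℝ → ℝ} {ψ φ : ℕ → ℕ → ℝ} (hs : BScheme T σ I J f uT ψ φ)
    (hT : 0 < T) (hf : ∀ x ∈ Set.Icc (0 : ℝ) 1, ∀ ξ, f x ξ ≤ 0)
    (hfb : ∃ B : ℝ, ∀ x ∈ Set.Icc (0 : ℝ) 1, ∀ ξ : ℝ, |f x ξ| ≤ B)
    (huT : ∃ B : ℝ, ∀ x ∈ Set.Icc (0 : ℝ) 1, |uT x| ≤ B) :
    MemM I J (exp (-(supIcc uT + supF f * T) / σ ^ 2)) φ := by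
  set K := supF f
  set μ := T / I / σ ^ 2
  have hK : 0 ≤ K := (abs_nonneg _).trans (abs_le_supF hfb ⟨le_rfl, zero_le_one⟩ 0)
  have hμI : μ * I ≤ T / σ ^ 2 := by
    rcases I.eq_zero_or_pos with rfl | hI
    · simp only [Nat.cast_zero, mul_zero]
      positivity
    · simp only [μ]
      rw [div_right_comm, div_mul_cancel₀ _ (Nat.cast_pos.2 hI).ne']
  have hpow {i : ℕ} (hi : i ≤ I) : (1 + μ * K) ^ (I - i) ≤ exp (K * T / σ ^ 2) :=
    calc (1 + μ * K) ^ (I - i) ≤ (1 + μ * K) ^ I :=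
          pow_le_pow_right₀ (le_add_of_nonneg_right (by positivity)) (Nat.sub_le I i)
      _ ≤ exp (μ * K) ^ I := by gcongr; linarith [add_one_le_exp (μ * K)]
      _ = exp (I * (μ * K)) := (exp_nat_mul _ _).symm
      _ ≤ exp (K * T / σ ^ 2) := by
          rw [exp_le_exp, mul_div_assoc]
          linarith [mul_le_mul_of_nonneg_left hμI hK]
  have hsplit : exp (-(supIcc uT + K * T) / σ ^ 2)
      = exp (-supIcc uT / σ ^ 2) / exp (K * T / σ ^ 2) := by
    rw [← exp_sub]
    ring_nf
  have hlow := hs.div_pow_le hT hf (K := K) (L := exp (-supIcc uT / σ ^ 2))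
    (fun x hx ξ => neg_le_of_abs_le (abs_le_supF hfb hx ξ)) (exp_pos _).le
    (fun j hj => by
      rw [hs.2 j hj, exp_le_exp]
      refine div_le_div_of_nonneg_right ?_ (sq_nonneg σ)
      exact neg_le_of_abs_le (abs_le_supIcc huT (natCast_div_natCast_mem_Icc hj)))
  intro i hi j hj
  rw [hsplit]
  exact (div_le_div_of_nonneg_left (exp_pos _).le (by positivity) (hpow hi)).trans
    (hlow i hi j hj)

lemma BScheme.le_of_le {uT : ℝ → ℝ} {ψ φ ψ' φ' : ℕ → ℕ → ℝ}
    (hs : BScheme T σ I J f uT ψ φ) (hs' : BScheme T σ I J f uT ψ' φ') (hT : 0 < T)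
    (hf : ∀ x ∈ Set.Icc (0 : ℝ) 1, ∀ ξ, f x ξ ≤ 0)
    (hfmono : ∀ x ∈ Set.Icc (0 : ℝ) 1, Antitone (f x))
    (hψψ' : ∀ i ≤ I, ∀ j ≤ J, ψ i j ≤ ψ' i j) (hψ : MemM I J 0 ψ)
    (hφ : ∀ i ≤ I, ∀ j ≤ J, 0 < φ i j) :
    ∀ i ≤ I, ∀ j ≤ J, φ' i j ≤ φ i j := by
  have hw := memM_zero_of_backward (I := I) (J := J) (κ := T / I * σ ^ 2 / 2 * J ^ 2)
    (by positivity) (w := fun i j => φ i j - φ' i j)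
    (fun j hj => by simp only [hs.2 j hj, hs'.2 j hj, sub_self, le_refl]) ?_
  · intro i hi j hj
    linarith [hw i hi j hj]
  intro i hi hnext j hj hneg
  have hxj := natCast_div_natCast_mem_Icc hj
  have hφi := hφ i hi.le j hj
  have hφφ' : φ i j ≤ φ' i j := by linarith
  have hreact := antitone_mul_le_mul (hfmono _ hxj)
    (mul_le_mul hφφ' (hψψ' i hi.le j hj) (hψ i hi.le j hj) (hφi.le.trans hφφ'))
    (hf _ hxj _) hφi.le hφφ'
  have hμ : 0 ≤ T / I / σ ^ 2 := by positivity
  simp only [neumannLap_sub]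
  linarith [hnext j hj, hs.sub_neumannLap_eq hT.ne' hi hj, hs'.sub_neumannLap_eq hT.ne' hi hj,
    mul_le_mul_of_nonneg_left hreact hμ]

lemma FScheme.memM_zero {m0 : ℝ → ℝ} {φ ψ : ℕ → ℕ → ℝ} (hs : FScheme T σ I J f m0 φ ψ)
    (hT : 0 < T) (hf : ∀ x ∈ Set.Icc (0 : ℝ) 1, ∀ ξ, f x ξ ≤ 0)
    (hm0 : ∀ x ∈ Set.Icc (0 : ℝ) 1, 0 ≤ m0 x) (hφ : ∀ j ≤ J, 0 < φ 0 j) :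
    MemM I J 0 ψ := by
  refine memM_zero_of_forward (κ := T / I * σ ^ 2 / 2 * J ^ 2) (by positivity)
    (fun j hj => ?_) fun i hi hprev j hj hneg => ?_
  · rw [hs.2 j hj]
    exact div_nonneg (hm0 _ (natCast_div_natCast_mem_Icc hj)) (hφ j hj).le
  · have hreact : 0 ≤ T / I / σ ^ 2 * f (j / J) (φ (i + 1) j * ψ (i + 1) j) * ψ (i + 1) j := by
      rw [mul_assoc]
      exact mul_nonneg (by positivity)
        (mul_nonneg_of_nonpos_of_nonpos (hf _ (natCast_div_natCast_mem_Icc hj) _) hneg.le)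
    rw [hs.sub_neumannLap_eq hT.ne' hi hj]
    linarith [hprev j hj]

lemma FScheme.le_of_forall_le {m0 : ℝ → ℝ} {φ ψ : ℕ → ℕ → ℝ} (hs : FScheme T σ I J f m0 φ ψ)
    (hT : 0 < T) (hf : ∀ x ∈ Set.Icc (0 : ℝ) 1, ∀ ξ, f x ξ ≤ 0) (hψ : MemM I J 0 ψ)
    {S : ℝ} (hS : ∀ j ≤ J, ψ 0 j ≤ S) :
    ∀ i ≤ I, ∀ j ≤ J, ψ i j ≤ S := by
  have hw := memM_zero_of_forward (I := I) (J := J) (κ := T / I * σ ^ 2 / 2 * J ^ 2)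
    (by positivity) (w := fun i j => S - ψ i j) (fun j hj => sub_nonneg.2 (hS j hj)) ?_
  · intro i hi j hj
    linarith [hw i hi j hj]
  intro i hi hprev j hj _
  have hreact : T / I / σ ^ 2 * f (j / J) (φ (i + 1) j * ψ (i + 1) j) * ψ (i + 1) j ≤ 0 :=
    mul_nonpos_of_nonpos_of_nonneg
      (mul_nonpos_of_nonneg_of_nonpos (by positivity) (hf _ (natCast_div_natCast_mem_Icc hj) _))
      (hψ (i + 1) hi j hj)
  simp only [neumannLap_sub, neumannLap_const, zero_sub]
  linarith [hprev j hj, hs.sub_neumannLap_eq hT.ne' hi hj]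

lemma FScheme.le_of_le {m0 : ℝ → ℝ} {φ ψ φ' ψ' : ℕ → ℕ → ℝ}
    (hs : FScheme T σ I J f m0 φ ψ) (hs' : FScheme T σ I J f m0 φ' ψ') (hT : 0 < T)
    (hf : ∀ x ∈ Set.Icc (0 : ℝ) 1, ∀ ξ, f x ξ ≤ 0)
    (hfmono : ∀ x ∈ Set.Icc (0 : ℝ) 1, Antitone (f x))
    (hm0 : ∀ x ∈ Set.Icc (0 : ℝ) 1, 0 ≤ m0 x) (hφ'φ : ∀ i ≤ I, ∀ j ≤ J, φ' i j ≤ φ i j)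
    (hφ' : ∀ i ≤ I, ∀ j ≤ J, 0 < φ' i j) (hψ' : MemM I J 0 ψ') :
    ∀ i ≤ I, ∀ j ≤ J, ψ i j ≤ ψ' i j := by
  have hw := memM_zero_of_forward (I := I) (J := J) (κ := T / I * σ ^ 2 / 2 * J ^ 2)
    (by positivity) (w := fun i j => ψ' i j - ψ i j) (fun j hj => ?_) ?_
  · intro i hi j hj
    linarith [hw i hi j hj]
  · simp only [hs.2 j hj, hs'.2 j hj, sub_nonneg]
    exact div_le_div_of_nonneg_left (hm0 _ (natCast_div_natCast_mem_Icc hj))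
      (hφ' 0 (Nat.zero_le I) j hj) (hφ'φ 0 (Nat.zero_le I) j hj)
  intro i hi hprev j hj hneg
  have hxj := natCast_div_natCast_mem_Icc hj
  have hφ'i := hφ' (i + 1) hi j hj
  have hψ'i := hψ' (i + 1) hi j hj
  have hψ'ψ : ψ' (i + 1) j ≤ ψ (i + 1) j := by linarith
  have hreact := antitone_mul_le_mul (hfmono _ hxj)
    (mul_le_mul (hφ'φ (i + 1) hi j hj) hψ'ψ hψ'i (hφ'i.le.trans (hφ'φ (i + 1) hi j hj)))
    (hf _ hxj _) hψ'i hψ'ψ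
  have hμ : 0 ≤ T / I / σ ^ 2 := by positivity
  simp only [neumannLap_sub]
  linarith [hprev j hj, hs.sub_neumannLap_eq hT.ne' hi hj, hs'.sub_neumannLap_eq hT.ne' hi hj,
    mul_le_mul_of_nonneg_left hreact hμ]

end Schemes

theorem stmt_7_general (T σ : ℝ) (hT : 0 < T)
    (I J : ℕ)
    (f : ℝ → ℝ → ℝ) (uT m0 : ℝ → ℝ)
    (hfb : ∃ B : ℝ, ∀ x ∈ Set.Icc (0:ℝ) 1, ∀ ξ : ℝ, |f x ξ| ≤ B)
    (hfneg : ∀ x ∈ Set.Icc (0:ℝ) 1, ∀ ξ : ℝ, f x ξ ≤ 0)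
    (hfmono : ∀ x ∈ Set.Icc (0:ℝ) 1, Antitone (f x))
    (huTb : ∃ B : ℝ, ∀ x ∈ Set.Icc (0:ℝ) 1, |uT x| ≤ B)
    (hm0b : ∃ B : ℝ, ∀ x ∈ Set.Icc (0:ℝ) 1, |m0 x| ≤ B)
    (hm0 : ∀ x ∈ Set.Icc (0:ℝ) 1, 0 ≤ m0 x)
    (Φs Ψs : ℕ → ℕ → ℕ → ℝ)
    (hΨ0 : ∀ i ≤ I, ∀ j ≤ J, Ψs 0 i j = 0)
    (hB : ∀ n : ℕ, BScheme T σ I J f uT (Ψs n) (Φs n))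
    (hF : ∀ n : ℕ, FScheme T σ I J f m0 (Φs n) (Ψs (n+1)))
 :
    (∀ n : ℕ, ∀ i ≤ I, ∀ j ≤ J, Φs (n+1) i j ≤ Φs n i j)
    ∧ (∀ n : ℕ, MemM I J (Real.exp (-(supIcc uT + supF f * T) / σ^2)) (Φs n))
    ∧ (∀ n : ℕ, ∀ i ≤ I, ∀ j ≤ J, Ψs n i j ≤ Ψs (n+1) i j)
    ∧ (∀ n : ℕ, MemM I J 0 (Ψs n))
    ∧ (∀ n : ℕ, ∀ i ≤ I, ∀ j ≤ J,
        Ψs n i j ≤ supIcc m0 / Real.exp (-(supIcc uT + supF f * T) / σ^2)) := by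
  set ε := exp (-(supIcc uT + supF f * T) / σ ^ 2)
  have hε : 0 < ε := exp_pos _
  have hΦ (n : ℕ) : MemM I J ε (Φs n) := (hB n).memM_exp hT hfneg hfb huTb
  have hΦpos (n : ℕ) : ∀ i ≤ I, ∀ j ≤ J, 0 < Φs n i j := fun i hi j hj =>
    hε.trans_le (hΦ n i hi j hj)
  have hΨ : ∀ n, MemM I J 0 (Ψs n)
    | 0 => fun i hi j hj => (hΨ0 i hi j hj).ge
    | n + 1 => (hF n).memM_zero hT hfneg hm0 fun j hj => hΦpos n 0 (Nat.zero_le I) j hj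
  have hΦanti (n : ℕ) (h : ∀ i ≤ I, ∀ j ≤ J, Ψs n i j ≤ Ψs (n + 1) i j) :
      ∀ i ≤ I, ∀ j ≤ J, Φs (n + 1) i j ≤ Φs n i j :=
    (hB n).le_of_le (hB (n + 1)) hT hfneg hfmono h (hΨ n) (hΦpos n)
  have hΨmono (n : ℕ) : ∀ i ≤ I, ∀ j ≤ J, Ψs n i j ≤ Ψs (n + 1) i j := by
    induction n with
    | zero => exact fun i hi j hj => (hΨ0 i hi j hj).trans_le (hΨ 1 i hi j hj)
    | succ n ih =>
      exact (hF n).le_of_le (hF (n + 1)) hT hfneg hfmono hm0 (hΦanti n ih)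
        (hΦpos (n + 1)) (hΨ (n + 2))
  refine ⟨fun n => hΦanti n (hΨmono n), hΦ, hΨmono, hΨ, ?_⟩
  rintro (_ | n) i hi j hj
  · rw [hΨ0 i hi j hj]
    exact div_nonneg (supIcc_nonneg m0) hε.le
  · refine (hF n).le_of_forall_le hT hfneg (hΨ (n + 1)) (fun j hj => ?_) i hi j hj
    rw [(hF n).2 j hj]
    exact div_le_div₀ (supIcc_nonneg m0)
      ((le_abs_self _).trans (abs_le_supIcc hm0b (natCast_div_natCast_mem_Icc hj))) hε
      (hΦ n 0 (Nat.zero_le I) j hj)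

theorem stmt_7 (T σ : ℝ) (hT : 0 < T) (hσ : 0 < σ)
    (I J : ℕ) (hI : 1 ≤ I) (hJ : 1 ≤ J)
    (f : ℝ → ℝ → ℝ) (uT m0 : ℝ → ℝ)
    (hfc : ∀ x ∈ Set.Icc (0:ℝ) 1, Continuous (f x))
    (hfb : ∃ B : ℝ, ∀ x ∈ Set.Icc (0:ℝ) 1, ∀ ξ : ℝ, |f x ξ| ≤ B)
    (hfneg : ∀ x ∈ Set.Icc (0:ℝ) 1, ∀ ξ : ℝ, f x ξ ≤ 0)
    (hfmono : ∀ x ∈ Set.Icc (0:ℝ) 1, Antitone (f x))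
    (huTb : ∃ B : ℝ, ∀ x ∈ Set.Icc (0:ℝ) 1, |uT x| ≤ B)
    (hm0b : ∃ B : ℝ, ∀ x ∈ Set.Icc (0:ℝ) 1, |m0 x| ≤ B)
    (hm0 : ∀ x ∈ Set.Icc (0:ℝ) 1, 0 ≤ m0 x)
    (Φs Ψs : ℕ → ℕ → ℕ → ℝ)
    (hΨ0 : ∀ i ≤ I, ∀ j ≤ J, Ψs 0 i j = 0)
    (hB : ∀ n : ℕ, BScheme T σ I J f uT (Ψs n) (Φs n))
    (hF : ∀ n : ℕ, FScheme T σ I J f m0 (Φs n) (Ψs (n+1)))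
 :
    (∀ n : ℕ, ∀ i ≤ I, ∀ j ≤ J, Φs (n+1) i j ≤ Φs n i j)
    ∧ (∀ n : ℕ, MemM I J (Real.exp (-(supIcc uT + supF f * T) / σ^2)) (Φs n))
    ∧ (∀ n : ℕ, ∀ i ≤ I, ∀ j ≤ J, Ψs n i j ≤ Ψs (n+1) i j)
    ∧ (∀ n : ℕ, MemM I J 0 (Ψs n))
    ∧ (∀ n : ℕ, ∀ i ≤ I, ∀ j ≤ J,
        Ψs n i j ≤ supIcc m0 / Real.exp (-(supIcc uT + supF f * T) / σ^2)) :=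
  stmt_7_general T σ hT I J f uT m0 hfb hfneg hfmono huTb hm0b hm0 Φs Ψs hΨ0 hB hF
end
end
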